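/- arXiv:1906.05477 — 7 statements merged into one kernel-verified Lean document; each statement's English description precedes it below -/
import Mathlib

section
/- Let G be a topological group that has small subgroups, i.e., every neighborhood of the identity of G contains a subgroup different from the trivial subgroup {1}. Then for every complex Hilbert space H there is no injective group homomorphism from G into the group of unitary operators on H that is continuous with respect to the operator-norm topology on the unitary group. -/
universe u v

/-!
In a real normed algebra, `a² - 1 = 2 (a - 1) + (a - 1)²`, so squaring multiplies the distance
to `1` by at least `3/2` as long as that distance is below `1/2`. Hence no element `a ≠ 1` has all
its powers within `1/2` of `1`: the ball of radius `1/2` around `1` contains no nontrivial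
subgroup. A continuous homomorphism from a group with small subgroups therefore sends some
nontrivial subgroup into that ball, hence to `1`, and cannot be injective.
-/

open Function Metric

def HasSmallSubgroups (G : Type*) [Group G] [TopologicalSpace G] : Prop :=
  ∀ U ∈ nhds (1 : G), ∃ K : Subgroup G, K ≠ ⊥ ∧ (K : Set G) ⊆ U

section NormedRing

variable {A : Type*} [NormedRing A] [NormedSpace ℝ A]

lemma three_halves_mul_norm_sub_one_le_norm_sq_sub_one {a : A} (ha : ‖a - 1‖ < 1 / 2) :
    (3 / 2 : ℝ) * ‖a - 1‖ ≤ ‖a ^ 2 - 1‖ := by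
  have hsq : (2 : ℕ) • (a - 1) = (a ^ 2 - 1) - (a - 1) * (a - 1) := by
    rw [two_nsmul]; noncomm_ring
  have htwo : 2 * ‖a - 1‖ ≤ ‖a ^ 2 - 1‖ + ‖a - 1‖ * ‖a - 1‖ := by
    calc 2 * ‖a - 1‖ = ‖(2 : ℕ) • (a - 1)‖ := by rw [RCLike.norm_nsmul ℝ]; simp
      _ ≤ ‖a ^ 2 - 1‖ + ‖(a - 1) * (a - 1)‖ := hsq ▸ norm_sub_le _ _
      _ ≤ ‖a ^ 2 - 1‖ + ‖a - 1‖ * ‖a - 1‖ := by gcongr; exact norm_mul_le _ _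
  nlinarith [norm_nonneg (a - 1)]

lemma three_halves_pow_mul_norm_sub_one_le {a : A} (ha : ∀ n : ℕ, ‖a ^ n - 1‖ < 1 / 2) (n : ℕ) :
    (3 / 2 : ℝ) ^ n * ‖a - 1‖ ≤ ‖a ^ 2 ^ n - 1‖ := by
  induction n with
  | zero => simp
  | succ n ih =>
    calc (3 / 2 : ℝ) ^ (n + 1) * ‖a - 1‖ = 3 / 2 * ((3 / 2) ^ n * ‖a - 1‖) := by ring
      _ ≤ 3 / 2 * ‖a ^ 2 ^ n - 1‖ := by gcongr
      _ ≤ ‖(a ^ 2 ^ n) ^ 2 - 1‖ := three_halves_mul_norm_sub_one_le_norm_sq_sub_one (ha _)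
      _ = ‖a ^ 2 ^ (n + 1) - 1‖ := by rw [← pow_mul, pow_succ]

lemma eq_one_of_forall_norm_pow_sub_one_lt {a : A} (ha : ∀ n : ℕ, ‖a ^ n - 1‖ < 1 / 2) :
    a = 1 := by
  by_contra hne
  have hpos : 0 < ‖a - 1‖ := norm_pos_iff.mpr (sub_ne_zero.mpr hne)
  obtain ⟨n, hn⟩ := pow_unbounded_of_one_lt (1 / (2 * ‖a - 1‖)) (by norm_num : (1 : ℝ) < 3 / 2)
  rw [div_lt_iff₀ (by positivity)] at hn
  have := (three_halves_pow_mul_norm_sub_one_le ha n).trans_lt (ha _)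
  nlinarith

end NormedRing

lemma HasSmallSubgroups.not_injective {G A : Type*} [Group G] [TopologicalSpace G]
    [NormedRing A] [NormedSpace ℝ A] (hG : HasSmallSubgroups G) {f : G →* A}
    (hf : ContinuousAt f 1) : ¬ Injective f := by
  intro hinj
  have hball : f ⁻¹' ball 1 (1 / 2) ∈ nhds (1 : G) :=
    hf.preimage_mem_nhds (map_one f ▸ ball_mem_nhds _ (by norm_num))
  obtain ⟨K, hK, hKball⟩ := hG _ hball
  obtain ⟨g, hgK, hg⟩ := K.bot_or_exists_ne_one.resolve_left hK
  refine hg (hinj ?_)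
  rw [map_one]
  refine eq_one_of_forall_norm_pow_sub_one_lt fun n => ?_
  simpa [dist_eq_norm] using hKball (pow_mem hgK n)

theorem stmt4_general {G : Type v} [Group G] [TopologicalSpace G]
    (hsmall : ∀ U ∈ nhds (1 : G), ∃ K : Subgroup G, K ≠ ⊥ ∧ (K : Set G) ⊆ U)
    (H : Type u) [NormedAddCommGroup H] [InnerProductSpace ℂ H] [CompleteSpace H] :
    ¬ ∃ π : G →* unitary (H →L[ℂ] H), Function.Injective π ∧ Continuous π := by
  rintro ⟨π, hinj, hcont⟩
  exact HasSmallSubgroups.not_injective (f := (unitary (H →L[ℂ] H)).subtype.comp π) hsmall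
    (continuous_subtype_val.comp hcont).continuousAt (Subtype.val_injective.comp hinj)

/-- If a topological group has small subgroups (every neighborhood of the identity contains a
nontrivial subgroup), then there is no injective norm-continuous homomorphism of `G` into the
unitary group of a complex Hilbert space. -/
theorem stmt4 {G : Type v} [Group G] [TopologicalSpace G] [IsTopologicalGroup G]
    (hsmall : ∀ U ∈ nhds (1 : G), ∃ K : Subgroup G, K ≠ ⊥ ∧ (K : Set G) ⊆ U)
    (H : Type u) [NormedAddCommGroup H] [InnerProductSpace ℂ H] [CompleteSpace H] :
    ¬ ∃ π : G →* unitary (H →L[ℂ] H), Function.Injective π ∧ Continuous π :=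
  stmt4_general hsmall H
end

section
/- The additive topological group C([0,1], ℝ) of continuous real-valued functions on the unit interval, equipped with the supremum norm, is norm unitarily representable. -/
open Topology

universe u

noncomputable section

/-- A topological group is norm unitarily representable if it admits an injective
group homomorphism onto a closed subgroup of the unitary group of some complex Hilbert
space with the operator-norm topology, which is a homeomorphism onto its image. -/
def IsNUR (G : Type u) [Group G] [TopologicalSpace G] : Prop :=
  ∃ (K : Type u) (_ : NormedAddCommGroup K) (_ : InnerProductSpace ℂ K) (_ : CompleteSpace K)
    (π : G →* unitary (K →L[ℂ] K)),
      Function.Injective π ∧ Topology.IsClosedEmbedding π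

/-!
Let `f ∈ C(X, ℝ)` act on `ℓ²(X × [0,1])` by multiplying the `(x, r)`-th coordinate by
`exp (i r f(x))`. Since `|e^{ia} - e^{ib}| ≤ |a - b|`, this unitary representation is
1-Lipschitz for the operator norm. Conversely, rescaling `a - b` by a suitable `r ∈ [0,1]` into
`[-π, π]`, Jordan's inequality gives `|e^{ira} - e^{irb}| ≥ (2/π) min (|a - b|, π)`, so the
representation is a uniform embedding of the complete space `C(X, ℝ)`, hence a closed embedding.
-/

open Real
open scoped ENNReal

namespace Circle

theorem norm_smul_sub_smul {E : Type*} [NormedAddCommGroup E] [NormedSpace ℂ E]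
    (z w : Circle) (v : E) : ‖z • v - w • v‖ = dist z w * ‖v‖ := by
  rw [smul_def, smul_def, ← sub_smul, norm_smul, ← dist_eq_norm]
  rfl

theorem dist_exp_exp (s t : ℝ) : dist (exp s) (exp t) = 2 * |sin ((s - t) / 2)| := by
  have h : (exp s : ℂ) - exp t = exp t * (Complex.exp (Complex.I * ↑(s - t)) - 1) := by
    simp only [coe_exp, mul_sub, mul_one, ← Complex.exp_add]
    push_cast
    ring_nf
  change dist (exp s : ℂ) (exp t) = _
  rw [dist_eq_norm, h, norm_mul, norm_coe, one_mul, Complex.norm_exp_I_mul_ofReal_sub_one,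
    norm_mul, Real.norm_two, Real.norm_eq_abs]

theorem dist_exp_exp_le (s t : ℝ) : dist (exp s) (exp t) ≤ |s - t| := by
  have := abs_sin_le_abs (x := (s - t) / 2)
  rw [abs_div, abs_two] at this
  rw [dist_exp_exp]
  linarith

theorem exists_min_le_dist_exp_mul (s t : ℝ) :
    ∃ r : unitInterval, min |s - t| π ≤ π / 2 * dist (exp (r * s)) (exp (r * t)) := by
  obtain ⟨r, hr⟩ : ∃ r : unitInterval, r * |s - t| = min |s - t| π := by
    rcases le_or_gt |s - t| π with h | h
    · exact ⟨1, by simp [h]⟩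
    · refine ⟨⟨π / |s - t|, div_nonneg pi_pos.le (abs_nonneg _),
        (div_le_one (pi_pos.trans h)).2 h.le⟩, ?_⟩
      rw [min_eq_right h.le]
      exact div_mul_cancel₀ _ (pi_pos.trans h).ne'
  have habs : |r * (s - t) / 2| = r * |s - t| / 2 := by
    rw [abs_div, abs_mul, abs_of_nonneg r.2.1, abs_two]
  have hsin : 2 / π * |r * (s - t) / 2| ≤ |sin (r * (s - t) / 2)| := by
    apply mul_abs_le_abs_sin
    rw [habs, hr]
    linarith [min_le_right |s - t| π]
  refine ⟨r, ?_⟩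
  rw [dist_exp_exp, ← mul_sub, ← hr]
  calc (r : ℝ) * |s - t| = π / 2 * (2 * (2 / π * |r * (s - t) / 2|)) := by
        rw [habs]
        field_simp
    _ ≤ π / 2 * (2 * |sin (r * (s - t) / 2)|) := by gcongr

end Circle

namespace lp

variable {ι : Type*} {E : ι → Type*}

section NormedSpace

variable [∀ i, NormedAddCommGroup (E i)] [∀ i, NormedSpace ℂ (E i)] {p : ℝ≥0∞} [Fact (1 ≤ p)]

def circleSMul (c : ι → Circle) : lp E p ≃ₗᵢ[ℂ] lp E p where
  toFun x := ⟨fun i ↦ c i • x i, (lp.memℓp x).mono' fun _ ↦ (Circle.norm_smul _ _).le⟩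
  invFun x := ⟨fun i ↦ (c i)⁻¹ • x i, (lp.memℓp x).mono' fun _ ↦ (Circle.norm_smul _ _).le⟩
  map_add' _ _ := lp.ext <| funext fun _ ↦ smul_add _ _ _
  map_smul' _ _ := lp.ext <| funext fun _ ↦ smul_comm _ _ _
  left_inv _ := lp.ext <| funext fun _ ↦ inv_smul_smul _ _
  right_inv _ := lp.ext <| funext fun _ ↦ smul_inv_smul _ _
  norm_map' _ := by
    have hp : p ≠ 0 := (zero_lt_one.trans_le Fact.out).ne'
    exact le_antisymm (lp.norm_mono hp fun _ ↦ (Circle.norm_smul _ _).le)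
      (lp.norm_mono hp fun _ ↦ (Circle.norm_smul _ _).ge)

def circleSMulHom : (ι → Circle) →* (lp E p ≃ₗᵢ[ℂ] lp E p) where
  toFun := circleSMul
  map_one' := LinearIsometryEquiv.ext fun _ ↦ lp.ext <| funext fun _ ↦ one_smul _ _
  map_mul' _ _ := LinearIsometryEquiv.ext fun _ ↦ lp.ext <| funext fun _ ↦ mul_smul _ _ _

end NormedSpace

variable [∀ i, NormedAddCommGroup (E i)] [∀ i, InnerProductSpace ℂ (E i)]
  [∀ i, CompleteSpace (E i)]

def circleSMulUnitary : (ι → Circle) →* unitary (lp E 2 →L[ℂ] lp E 2) :=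
  Unitary.linearIsometryEquiv.symm.toMonoidHom.comp circleSMulHom

theorem norm_circleSMulUnitary_sub_apply_apply (c d : ι → Circle) (x : lp E 2) (i : ι) :
    ‖((circleSMulUnitary (E := E) c : lp E 2 →L[ℂ] lp E 2) -
        (circleSMulUnitary (E := E) d : lp E 2 →L[ℂ] lp E 2)) x i‖ =
      dist (c i) (d i) * ‖x i‖ :=
  Circle.norm_smul_sub_smul _ _ _

theorem dist_circleSMulUnitary_le {c d : ι → Circle} {M : ℝ} (hM : 0 ≤ M)
    (h : ∀ i, dist (c i) (d i) ≤ M) :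
    dist (circleSMulUnitary (E := E) c) (circleSMulUnitary d) ≤ M := by
  rw [Subtype.dist_eq, dist_eq_norm]
  refine ContinuousLinearMap.opNorm_le_bound _ hM fun x ↦ ?_
  calc _ ≤ ‖(M : ℂ) • x‖ := lp.norm_mono two_ne_zero fun i ↦ by
          rw [norm_circleSMulUnitary_sub_apply_apply, lp.coeFn_smul, Pi.smul_apply, norm_smul,
            Complex.norm_real, Real.norm_of_nonneg hM]
          exact mul_le_mul_of_nonneg_right (h i) (norm_nonneg _)
    _ = M * ‖x‖ := by rw [norm_smul, Complex.norm_real, Real.norm_of_nonneg hM]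

theorem dist_le_dist_circleSMulUnitary (c d : ι → Circle) (i : ι) [Nontrivial (E i)] :
    dist (c i) (d i) ≤ dist (circleSMulUnitary (E := E) c) (circleSMulUnitary d) := by
  classical
  obtain ⟨v, hv⟩ := exists_ne (0 : E i)
  rw [Subtype.dist_eq, dist_eq_norm]
  set T := (circleSMulUnitary (E := E) c : lp E 2 →L[ℂ] lp E 2) -
    (circleSMulUnitary (E := E) d : lp E 2 →L[ℂ] lp E 2)
  have hv_single : ‖lp.single 2 i v‖ = ‖v‖ := lp.norm_single (by norm_num) i v
  have key : dist (c i) (d i) * ‖v‖ ≤ ‖T‖ * ‖v‖ :=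
    calc dist (c i) (d i) * ‖v‖ = ‖T (lp.single 2 i v) i‖ := by
          rw [norm_circleSMulUnitary_sub_apply_apply, lp.single_apply_self]
      _ ≤ ‖T (lp.single 2 i v)‖ := lp.norm_apply_le_norm two_ne_zero _ i
      _ ≤ ‖T‖ * ‖v‖ := hv_single ▸ T.le_opNorm _
  exact le_of_mul_le_mul_right key (norm_pos_iff.2 hv)

end lp

instance {α : Type*} [UniformSpace α] [CompleteSpace α] : CompleteSpace (Multiplicative α) :=
  ‹CompleteSpace α›

theorem isUniformEmbedding_of_min_dist_le {α β : Type*} [MetricSpace α] [PseudoMetricSpace β]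
    {φ : α → β} (hφ : UniformContinuous φ) {C K : ℝ} (hC : 0 < C) (hK : 0 < K)
    (h : ∀ a b, min (dist a b) C ≤ K * dist (φ a) (φ b)) : IsUniformEmbedding φ := by
  refine Metric.isUniformEmbedding_iff'.2 ⟨Metric.uniformContinuous_iff.1 hφ, fun δ hδ ↦ ?_⟩
  refine ⟨min δ C / K, div_pos (lt_min hδ hC) hK, fun {a b} hab ↦ ?_⟩
  by_contra! hba
  have := (min_le_min_right C hba).trans (h a b)
  rw [lt_div_iff₀' hK] at hab
  linarith

namespace ContinuousMap

variable (X : Type*) [TopologicalSpace X]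

def scaledExpHom : Multiplicative C(X, ℝ) →* (X × unitInterval → Circle) where
  toFun f p := Circle.exp (p.2 * f.toAdd p.1)
  map_one' := funext fun _ ↦ by simp
  map_mul' _ _ := funext fun _ ↦ by simp [mul_add, Circle.exp_add]

def scaledExpUnitary : Multiplicative C(X, ℝ) →*
    unitary (lp (fun _ : X × unitInterval ↦ ℂ) 2 →L[ℂ] lp (fun _ : X × unitInterval ↦ ℂ) 2) :=
  lp.circleSMulUnitary.comp (scaledExpHom X)

variable [CompactSpace X]

theorem lipschitzWith_one_scaledExpUnitary : LipschitzWith 1 (scaledExpUnitary X) := by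
  refine LipschitzWith.of_dist_le_mul fun f g ↦ ?_
  rw [NNReal.coe_one, one_mul]
  refine lp.dist_circleSMulUnitary_le dist_nonneg fun ⟨x, r⟩ ↦ ?_
  calc dist (Circle.exp (r * f.toAdd x)) (Circle.exp (r * g.toAdd x))
      ≤ |r * f.toAdd x - r * g.toAdd x| := Circle.dist_exp_exp_le _ _
    _ ≤ dist (f.toAdd x) (g.toAdd x) := by
      rw [← mul_sub, abs_mul, abs_of_nonneg r.2.1, Real.dist_eq]
      exact mul_le_of_le_one_left (abs_nonneg _) r.2.2
    _ ≤ dist f g := dist_apply_le_dist x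

theorem min_dist_le_dist_scaledExpUnitary (f g : Multiplicative C(X, ℝ)) :
    min (dist f g) π ≤ π / 2 * dist (scaledExpUnitary X f) (scaledExpUnitary X g) := by
  set D := π / 2 * dist (scaledExpUnitary X f) (scaledExpUnitary X g)
  rcases le_or_gt π D with hD | hD
  · exact (min_le_right _ _).trans hD
  refine min_le_of_left_le ((dist_le (by positivity)).2 fun x ↦ ?_)
  obtain ⟨r, hr⟩ := Circle.exists_min_le_dist_exp_mul (f.toAdd x) (g.toAdd x)
  have hmin : min |f.toAdd x - g.toAdd x| π ≤ D := hr.trans <| mul_le_mul_of_nonneg_left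
    (lp.dist_le_dist_circleSMulUnitary (E := fun _ ↦ ℂ) (scaledExpHom X f) (scaledExpHom X g)
      (x, r)) (by positivity)
  have hlt := (min_lt_iff.1 (hmin.trans_lt hD)).resolve_right (lt_irrefl π)
  rwa [min_eq_left hlt.le] at hmin

end ContinuousMap

theorem isNUR_multiplicative_continuousMap (X : Type u) [TopologicalSpace X] [CompactSpace X] :
    IsNUR (Multiplicative C(X, ℝ)) := by
  have h := isUniformEmbedding_of_min_dist_le
    (ContinuousMap.lipschitzWith_one_scaledExpUnitary X).uniformContinuous pi_pos
    (half_pos pi_pos) (ContinuousMap.min_dist_le_dist_scaledExpUnitary X)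
  exact ⟨_, _, _, _, ContinuousMap.scaledExpUnitary X, h.injective, h.isClosedEmbedding⟩

/-- The additive group `C([0,1], ℝ)` of continuous real-valued functions on the unit interval,
with the supremum norm, is norm unitarily representable. -/
theorem stmt6 : IsNUR (Multiplicative C(unitInterval, ℝ)) :=
  isNUR_multiplicative_continuousMap unitInterval
end
end

section
/- Every separable real Banach space, regarded as an additive topological group with the norm topology, is norm unitarily representable. -/
open Topology

universe u

noncomputable section

/-!
Choose functionals `gₙ` of norm at most `1` with `‖z‖ / 2 ≤ |gₙ z|` for all `z` (possible by
separability), and let `x` act diagonally on `ℓ²(ℕ × ℕ)` by the characters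
`exp (i gₙ x / (m + 1))`. The operator-norm distance between the images of `x` and `y` is the
supremum of `|exp (i gₙ (x - y) / (m + 1)) - 1|`. It is at most `‖x - y‖`, and taking
`m = ⌊|gₙ (x - y)|⌋` puts the angle in `[min (|gₙ (x - y)|) (1/2), 1]`, where Jordan's inequality
bounds it below by `min 1 ‖x - y‖ / π`. Hence the representation is a uniform embedding of a
complete space, so a closed embedding.
-/

open scoped ENNReal lp

theorem isClosedEmbedding_of_dist_le_of_le_dist {X Y : Type*} [MetricSpace X] [CompleteSpace X]
    [MetricSpace Y] {f : X → Y} {c : ℝ} (hc : 0 < c)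
    (h_le : ∀ x y, dist (f x) (f y) ≤ dist x y)
    (h_ge : ∀ x y, c * min 1 (dist x y) ≤ dist (f x) (f y)) :
    IsClosedEmbedding f := by
  refine IsUniformEmbedding.isClosedEmbedding <| Metric.isUniformEmbedding_iff'.2
    ⟨fun ε hε => ⟨ε, hε, fun h => (h_le _ _).trans_lt h⟩,
      fun δ hδ => ⟨c * min 1 δ, by positivity, fun {a b} h => ?_⟩⟩
  by_contra! hδ_le
  have : c * min 1 δ ≤ c * min 1 (dist a b) := by gcongr
  linarith [h_ge a b]

theorem exists_half_norming_seq (𝕜 E : Type*) [RCLike 𝕜] [NormedAddCommGroup E]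
    [NormedSpace 𝕜 E] [TopologicalSpace.SeparableSpace E] :
    ∃ g : ℕ → E →L[𝕜] 𝕜, (∀ n, ‖g n‖ ≤ 1) ∧ ∀ z, ∃ n, ‖z‖ / 2 ≤ ‖g n z‖ := by
  obtain ⟨u, hu⟩ := TopologicalSpace.exists_dense_seq E
  choose g hg_norm hg_eq using fun n => exists_dual_vector'' 𝕜 (u n)
  refine ⟨g, hg_norm, fun z => ?_⟩
  rcases eq_or_ne z 0 with rfl | hz
  · exact ⟨0, by simp⟩
  obtain ⟨n, hn⟩ := hu.exists_dist_lt z (by positivity : 0 < ‖z‖ / 4)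
  refine ⟨n, ?_⟩
  have h_approx : ‖g n (u n - z)‖ ≤ ‖z - u n‖ := by
    rw [norm_sub_rev]
    exact ((g n).le_opNorm _).trans (mul_le_of_le_one_left (norm_nonneg _) (hg_norm n))
  rw [map_sub, hg_eq n] at h_approx
  rw [dist_eq_norm] at hn
  have h₁ := norm_sub_norm_le (‖u n‖ : 𝕜) (g n z)
  have h₂ := norm_sub_norm_le z (u n)
  rw [RCLike.norm_ofReal, abs_norm] at h₁
  linarith

theorem exists_nat_abs_div_succ_mem_Icc (a : ℝ) :
    ∃ m : ℕ, |a| / (m + 1) ∈ Set.Icc (min |a| (1 / 2)) 1 := by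
  refine ⟨⌊|a|⌋₊, ?_, div_le_one_of_le₀ (Nat.lt_floor_add_one _).le (by positivity)⟩
  rcases Nat.eq_zero_or_pos ⌊|a|⌋₊ with hm | hm
  · simp [hm]
  · have hm' : (1 : ℝ) ≤ ⌊|a|⌋₊ := by exact_mod_cast hm
    refine min_le_of_right_le ?_
    rw [le_div_iff₀ (by positivity)]
    linarith [Nat.floor_le (abs_nonneg a)]

theorem Complex.two_div_pi_mul_abs_le_norm_exp_I_mul_ofReal_sub_one {t : ℝ}
    (ht : |t| ≤ Real.pi) : 2 / Real.pi * |t| ≤ ‖exp (I * t) - 1‖ := by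
  have hsin := Real.mul_abs_le_abs_sin (x := t / 2) (by rw [abs_div, abs_two]; linarith)
  rw [abs_div, abs_two] at hsin
  rw [norm_exp_I_mul_ofReal_sub_one, norm_mul, Real.norm_eq_abs, Real.norm_eq_abs, abs_two]
  linarith

namespace Circle

theorem norm_coe_sub_coe (u v : Circle) : ‖(u : ℂ) - v‖ = ‖((u / v : Circle) : ℂ) - 1‖ := by
  rw [← mul_one ‖_ - 1‖, ← norm_coe v, ← norm_mul, sub_mul, coe_div,
    div_mul_cancel₀ _ v.coe_ne_zero, one_mul]

theorem norm_coe_exp_sub_one_le (t : ℝ) : ‖(exp t : ℂ) - 1‖ ≤ ‖t‖ := by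
  rw [coe_exp, mul_comm]
  exact Real.norm_exp_I_mul_ofReal_sub_one_le

theorem two_div_pi_mul_abs_le_norm_coe_exp_sub_one {t : ℝ} (ht : |t| ≤ Real.pi) :
    2 / Real.pi * |t| ≤ ‖(exp t : ℂ) - 1‖ := by
  rw [coe_exp, mul_comm (t : ℂ)]
  exact Complex.two_div_pi_mul_abs_le_norm_exp_I_mul_ofReal_sub_one ht

end Circle

namespace lp

section Diagonal

variable {𝕜 : Type*} [RCLike 𝕜] {I : Type*}

theorem norm_infty_mul_apply_le (a : ℓ^∞(I, 𝕜)) (f : ℓ^2(I, 𝕜)) (i : I) :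
    ‖a i * f i‖ ≤ ‖a‖ * ‖f i‖ :=
  (norm_mul_le _ _).trans <| by gcongr; exact norm_apply_le_norm ENNReal.top_ne_zero a i

theorem memℓp_infty_mul (a : ℓ^∞(I, 𝕜)) (f : ℓ^2(I, 𝕜)) : Memℓp (⇑a * ⇑f) 2 :=
  ((lp.memℓp f).norm.const_mul ‖a‖).mono (norm_infty_mul_apply_le a f)

def diagonal (a : ℓ^∞(I, 𝕜)) : ℓ^2(I, 𝕜) →L[𝕜] ℓ^2(I, 𝕜) :=
  LinearMap.mkContinuous
    { toFun f := ⟨⇑a * ⇑f, memℓp_infty_mul a f⟩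
      map_add' f g := lp.ext <| mul_add (a : I → 𝕜) f g
      map_smul' c f := lp.ext <| mul_smul_comm c (a : I → 𝕜) f }
    ‖a‖ fun f => calc
      ‖(⟨⇑a * ⇑f, memℓp_infty_mul a f⟩ : ℓ^2(I, 𝕜))‖ ≤ ‖(‖a‖ : 𝕜) • f‖ :=
        norm_mono two_ne_zero fun i => by
          simpa [norm_smul] using norm_infty_mul_apply_le a f i
      _ = ‖a‖ * ‖f‖ := by simp [norm_const_smul two_ne_zero]

@[simp]
theorem coeFn_diagonal (a : ℓ^∞(I, 𝕜)) (f : ℓ^2(I, 𝕜)) : ⇑(diagonal a f) = ⇑a * ⇑f := rfl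

theorem star_diagonal (a : ℓ^∞(I, 𝕜)) : star (diagonal a) = diagonal (star a) := by
  rw [ContinuousLinearMap.star_eq_adjoint, eq_comm, ContinuousLinearMap.eq_adjoint_iff]
  intro f g
  simp only [lp.inner_eq_tsum, coeFn_diagonal, Pi.mul_apply, coeFn_star, Pi.star_apply,
    RCLike.inner_apply, map_mul, RCLike.star_def, RCLike.conj_conj]
  congr 1 with i
  ring

def diagonalStarAlgHom : ℓ^∞(I, 𝕜) →⋆ₐ[𝕜] (ℓ^2(I, 𝕜) →L[𝕜] ℓ^2(I, 𝕜)) where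
  toFun := diagonal
  map_one' := by ext; simp
  map_mul' a b := by ext; simp [mul_assoc]
  map_zero' := by ext f i; exact zero_mul (f i)
  map_add' a b := by ext f i; exact add_mul (a i) (b i) (f i)
  commutes' c := by ext f i; rfl
  map_star' a := (star_diagonal a).symm

theorem norm_diagonal (a : ℓ^∞(I, 𝕜)) : ‖diagonal a‖ = ‖a‖ := by
  classical
  refine le_antisymm (LinearMap.mkContinuous_norm_le _ (norm_nonneg a) _) ?_
  refine norm_le_of_forall_le (norm_nonneg _) fun i => ?_
  let e : ℓ^2(I, 𝕜) := lp.single 2 i 1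
  calc ‖a i‖ = ‖diagonal a e i‖ := by
        rw [coeFn_diagonal, Pi.mul_apply, lp.single_apply_self, mul_one]
    _ ≤ ‖diagonal a e‖ := norm_apply_le_norm two_ne_zero _ i
    _ ≤ ‖diagonal a‖ * ‖e‖ := (diagonal a).le_opNorm e
    _ = ‖diagonal a‖ := by rw [lp.norm_single two_pos, norm_one, mul_one]

theorem isometry_diagonalStarAlgHom : Isometry (diagonalStarAlgHom (𝕜 := 𝕜) (I := I)) :=
  AddMonoidHomClass.isometry_of_norm _ fun a => norm_diagonal a

end Diagonal

variable {I : Type*}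

def unitaryOfCircle : (I → Circle) →* unitary ℓ^∞(I, ℂ) where
  toFun u := ⟨⟨fun i => u i, memℓp_infty ⟨1, by rintro _ ⟨i, rfl⟩; exact (Circle.norm_coe _).le⟩⟩,
    Unitary.mem_iff.2 ⟨by ext i; simp [← Circle.coe_inv_eq_conj],
      by ext i; simp [← Circle.coe_inv_eq_conj]⟩⟩
  map_one' := rfl
  map_mul' _ _ := rfl

theorem dist_unitaryOfCircle_le {u v : I → Circle} {C : ℝ} (hC : 0 ≤ C)
    (h : ∀ i, ‖(u i : ℂ) - v i‖ ≤ C) : dist (unitaryOfCircle u) (unitaryOfCircle v) ≤ C := by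
  rw [Subtype.dist_eq, dist_eq_norm]
  exact norm_le_of_forall_le hC h

theorem norm_sub_le_dist_unitaryOfCircle (u v : I → Circle) (i : I) :
    ‖(u i : ℂ) - v i‖ ≤ dist (unitaryOfCircle u) (unitaryOfCircle v) := by
  rw [Subtype.dist_eq, dist_eq_norm]
  exact norm_apply_le_norm ENNReal.top_ne_zero (unitaryOfCircle u - unitaryOfCircle v : ℓ^∞(I, ℂ)) i

end lp

section DiagonalRepresentation

variable {E I : Type*} [NormedAddCommGroup E] [NormedSpace ℝ E]

def expChar (φ : I → E →L[ℝ] ℝ) : Multiplicative E →* (I → Circle) :=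
  MonoidHom.pi fun i => AddMonoidHom.toMultiplicativeLeft (Circle.expHom.comp (φ i : E →+ ℝ))

theorem expChar_ofAdd_apply (φ : I → E →L[ℝ] ℝ) (x : E) (i : I) :
    expChar φ (.ofAdd x) i = Circle.exp (φ i x) := rfl

def diagonalRep (φ : I → E →L[ℝ] ℝ) :
    Multiplicative E →* unitary (ℓ^2(I, ℂ) →L[ℂ] ℓ^2(I, ℂ)) :=
  (Unitary.map (StarMonoidHom.ofClass (lp.diagonalStarAlgHom (𝕜 := ℂ) (I := I)))).toMonoidHom.comp
    (lp.unitaryOfCircle.comp (expChar φ))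

theorem coe_diagonalRep (φ : I → E →L[ℝ] ℝ) (x : Multiplicative E) :
    (diagonalRep φ x : ℓ^2(I, ℂ) →L[ℂ] ℓ^2(I, ℂ)) =
      lp.diagonalStarAlgHom (𝕜 := ℂ) (lp.unitaryOfCircle (expChar φ x) : ℓ^∞(I, ℂ)) := rfl

theorem dist_diagonalRep (φ : I → E →L[ℝ] ℝ) (x y : Multiplicative E) :
    dist (diagonalRep φ x) (diagonalRep φ y) =
      dist (lp.unitaryOfCircle (expChar φ x)) (lp.unitaryOfCircle (expChar φ y)) := by
  rw [Subtype.dist_eq, Subtype.dist_eq, coe_diagonalRep, coe_diagonalRep]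
  exact lp.isometry_diagonalStarAlgHom.dist_eq _ _

theorem dist_diagonalRep_le {φ : I → E →L[ℝ] ℝ} (hφ : ∀ i, ‖φ i‖ ≤ 1) (x y : E) :
    dist (diagonalRep φ (.ofAdd x)) (diagonalRep φ (.ofAdd y)) ≤ dist x y := by
  rw [dist_diagonalRep]
  refine lp.dist_unitaryOfCircle_le dist_nonneg fun i => ?_
  rw [expChar_ofAdd_apply, expChar_ofAdd_apply, Circle.norm_coe_sub_coe, ← Circle.exp_sub,
    ← map_sub, dist_eq_norm]
  exact (Circle.norm_coe_exp_sub_one_le _).trans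
    (((φ i).le_of_opNorm_le (hφ i) _).trans_eq (one_mul _))

theorem norm_exp_sub_one_le_dist_diagonalRep (φ : I → E →L[ℝ] ℝ) (x y : E) (i : I) :
    ‖(Circle.exp (φ i (x - y)) : ℂ) - 1‖ ≤
      dist (diagonalRep φ (.ofAdd x)) (diagonalRep φ (.ofAdd y)) := by
  rw [dist_diagonalRep, map_sub, Circle.exp_sub, ← Circle.norm_coe_sub_coe]
  exact lp.norm_sub_le_dist_unitaryOfCircle (expChar φ (.ofAdd x)) (expChar φ (.ofAdd y)) i

end DiagonalRepresentation

section Dilations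

universe v

variable {E : Type*} [NormedAddCommGroup E] [NormedSpace ℝ E]

def dilations (g : ℕ → E →L[ℝ] ℝ) (i : ULift.{v} (ℕ × ℕ)) : E →L[ℝ] ℝ :=
  ((i.down.2 : ℝ) + 1)⁻¹ • g i.down.1

theorem norm_dilations_le {g : ℕ → E →L[ℝ] ℝ} (hg : ∀ n, ‖g n‖ ≤ 1) (i : ULift.{v} (ℕ × ℕ)) :
    ‖dilations g i‖ ≤ 1 := by
  rw [dilations, norm_smul, norm_inv, Real.norm_of_nonneg (by positivity)]
  exact inv_mul_le_one_of_le₀ ((hg _).trans (by simp)) (by positivity)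

theorem exists_le_norm_exp_dilations_sub_one {g : ℕ → E →L[ℝ] ℝ}
    (hg : ∀ z, ∃ n, ‖z‖ / 2 ≤ ‖g n z‖) (z : E) :
    ∃ i : ULift.{v} (ℕ × ℕ),
      1 / Real.pi * min 1 ‖z‖ ≤ ‖(Circle.exp (dilations g i z) : ℂ) - 1‖ := by
  obtain ⟨n, hn⟩ := hg z
  obtain ⟨m, hm_lo, hm_hi⟩ := exists_nat_abs_div_succ_mem_Icc (g n z)
  refine ⟨⟨n, m⟩, ?_⟩
  have h_eq : |dilations g (ULift.up.{v} (n, m)) z| = |g n z| / (m + 1) := by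
    simp [dilations, abs_mul, abs_inv, abs_of_pos (by positivity : (0 : ℝ) < m + 1),
      div_eq_inv_mul]
  rw [Real.norm_eq_abs] at hn
  calc 1 / Real.pi * min 1 ‖z‖ = 2 / Real.pi * min (1 / 2) (‖z‖ / 2) := by
        rw [min_div_div_right two_pos.le]; ring
    _ ≤ 2 / Real.pi * |dilations g (ULift.up.{v} (n, m)) z| := by
        rw [h_eq, min_comm]; gcongr; exact (min_le_min_right _ hn).trans hm_lo
    _ ≤ _ := Circle.two_div_pi_mul_abs_le_norm_coe_exp_sub_one (by
        rw [h_eq]; linarith [Real.pi_gt_three])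

end Dilations

/-- Every separable real Banach space, as an additive topological group with the norm topology,
is norm unitarily representable. -/
theorem stmt7 (E : Type u) [NormedAddCommGroup E] [NormedSpace ℝ E] [CompleteSpace E]
    [TopologicalSpace.SeparableSpace E] :
    IsNUR (Multiplicative E) := by
  obtain ⟨g, hg_norm, hg_norming⟩ := exists_half_norming_seq ℝ E
  let φ := dilations.{u} g
  have h_emb : IsClosedEmbedding fun x : E => diagonalRep φ (.ofAdd x) :=
    isClosedEmbedding_of_dist_le_of_le_dist (by positivity : 0 < 1 / Real.pi)
      (dist_diagonalRep_le (norm_dilations_le hg_norm)) fun x y => by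
        obtain ⟨i, hi⟩ := exists_le_norm_exp_dilations_sub_one hg_norming (x - y)
        exact (dist_eq_norm x y ▸ hi).trans (norm_exp_sub_one_le_dist_diagonalRep φ x y i)
  exact ⟨_, _, _, _, diagonalRep φ, h_emb.injective, h_emb⟩

end
end

section
/- Let G be the unitary group of the C*-algebra C(𝕋, ℂ) of continuous complex-valued functions on the unit circle 𝕋, equipped with the supremum norm, and let V = {u ∈ G : ‖u − 1‖ < 2}. Then for every natural number n and every finite subset F ⊆ G one has F·Vⁿ ≠ G. In particular, G with the norm topology is not bounded. -/
/-!
Unitaries of `C(X, ℂ)` within distance `< 2` of `1` never take the value `-1`, so they have a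
continuous logarithm (the principal branch). Unitaries of the form `exp ∘ h` form a subgroup `H`
containing `Vⁿ` for every `n`, and `F·Vⁿ = G` would make `H` of finite index, hence put a power
`zᵐ` (`m ≠ 0`) of the coordinate function of `𝕋` into `H`. But `zᵐ` has winding number `m`, so
it is not `exp ∘ h` for a continuous `h`.
-/

open Topology Pointwise

noncomputable section

/-- A topological group `G` is bounded if for every neighborhood `V` of the identity there
exist `n ∈ ℕ` and a finite set `F ⊆ G` with `G = Vⁿ·F`. -/
def IsBoundedTopologicalGroup (G : Type*) [Group G] [TopologicalSpace G] : Prop :=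
  ∀ V ∈ nhds (1 : G), ∃ (n : ℕ) (F : Set G), F.Finite ∧ V ^ n * F = Set.univ

/-- The unit circle `𝕋 ⊆ ℂ`. -/
abbrev Torus : Type := Metric.sphere (0 : ℂ) 1

open Complex

theorem Subgroup.finiteIndex_of_finite_mul_eq_univ {G : Type*} [Group G] (H : Subgroup G)
    {F : Set G} (hF : F.Finite) (hcover : F * (H : Set G) = Set.univ) : H.FiniteIndex := by
  have : Finite (G ⧸ H) := by
    refine Set.finite_univ_iff.mp <| (hF.image (↑)).subset fun q _ => ?_
    induction q using QuotientGroup.induction_on with | H g => ?_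
    obtain ⟨f, hf, h, hh, rfl⟩ : g ∈ F * (H : Set G) := hcover ▸ Set.mem_univ g
    exact ⟨f, hf, (QuotientGroup.eq.2 (by simpa using hh)).symm⟩
  exact H.finiteIndex_of_finite_quotient

theorem setOf_norm_sub_one_lt_mem_nhds {A : Type*} [NormedRing A] [StarMul A] {r : ℝ}
    (hr : 0 < r) : {u : unitary A | ‖(u : A) - 1‖ < r} ∈ 𝓝 1 := by
  have : Metric.ball (1 : A) r ∈ 𝓝 ((1 : unitary A) : A) := Metric.ball_mem_nhds _ hr
  simpa [Metric.ball, dist_eq_norm] using continuous_subtype_val.continuousAt.preimage_mem_nhds this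

theorem Complex.mem_slitPlane_of_norm_eq_one {w : ℂ} (hw : ‖w‖ = 1) (h : ‖w - 1‖ < 2) :
    w ∈ slitPlane := by
  refine Set.singleton_subset_iff.1 <|
    (subset_slitPlane_iff_of_subset_sphere (r := 1) (by simpa using hw)).2 ?_
  rintro rfl
  norm_num at h

theorem eq_of_forall_eq_intCast {X : Type*} [TopologicalSpace X] [PreconnectedSpace X]
    {f : X → ℝ} (hf : Continuous f) (hint : ∀ x, ∃ k : ℤ, f x = k) (x y : X) : f x = f y := by
  choose k hk using hint
  have hk_cont : Continuous k :=
    Int.isClosedEmbedding_coe_real.isEmbedding.continuous_iff.2 <| by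
      rwa [show ((↑) ∘ k : X → ℝ) = f from funext fun x => (hk x).symm]
  rw [hk, hk, PreconnectedSpace.constant ‹_› hk_cont]

namespace ContinuousMap

variable {X : Type*} [TopologicalSpace X]

theorem mem_unitary_iff_forall_norm_eq_one {f : C(X, ℂ)} :
    f ∈ unitary C(X, ℂ) ↔ ∀ x, ‖f x‖ = 1 := by
  simp only [Unitary.mem_iff_star_mul_self, ContinuousMap.ext_iff, mul_apply, star_apply,
    one_apply, Complex.star_def, conj_mul']
  refine forall_congr' fun x => ?_
  norm_cast
  exact pow_eq_one_iff_of_nonneg (norm_nonneg _) two_ne_zero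

variable (X) in
def unitaryExpSubgroup : Subgroup (unitary C(X, ℂ)) where
  carrier := {u | ∃ h : C(X, ℂ), ∀ x, (u : C(X, ℂ)) x = exp (h x)}
  one_mem' := ⟨0, fun x => by simp⟩
  mul_mem' := by
    rintro u v ⟨f, hf⟩ ⟨g, hg⟩
    exact ⟨f + g, fun x => by simp [hf x, hg x, exp_add]⟩
  inv_mem' := by
    rintro u ⟨f, hf⟩
    refine ⟨star f, fun x => ?_⟩
    rw [← Unitary.star_eq_inv, Unitary.coe_star, star_apply, hf, star_apply]
    exact (exp_conj _).symm

theorem setOf_norm_sub_one_lt_two_subset_unitaryExpSubgroup [CompactSpace X] :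
    {u : unitary C(X, ℂ) | ‖(u : C(X, ℂ)) - 1‖ < 2} ⊆ unitaryExpSubgroup X := by
  intro u hu
  have hslit : ∀ x, (u : C(X, ℂ)) x ∈ slitPlane := fun x =>
    mem_slitPlane_of_norm_eq_one (mem_unitary_iff_forall_norm_eq_one.1 u.2 x)
      ((norm_lt_iff _ two_pos).1 hu x)
  exact ⟨⟨_, (u : C(X, ℂ)).continuous.clog hslit⟩,
    fun x => (exp_log (slitPlane_ne_zero (hslit x))).symm⟩

end ContinuousMap

namespace Torus

def expMapCircle : C(ℝ, Torus) :=
  ⟨fun θ => ⟨exp (θ * I), by simp⟩, by fun_prop⟩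

theorem expMapCircle_two_pi : expMapCircle (2 * Real.pi) = expMapCircle 0 :=
  Subtype.ext <| by simp [expMapCircle, exp_two_pi_mul_I]

theorem eq_zero_of_forall_exp_eq_pow {h : C(Torus, ℂ)} {m : ℕ}
    (hh : ∀ z : Torus, exp (h z) = (z : ℂ) ^ m) : m = 0 := by
  -- `g θ` is an integer for every `θ`, yet going once around the circle lowers it by `m`.
  set g : ℝ → ℝ := fun θ => ((h (expMapCircle θ)).im - m * θ) / (2 * Real.pi)
  have hg_int : ∀ θ, ∃ k : ℤ, g θ = k := by
    intro θ
    have : exp (h (expMapCircle θ) - m * (θ * I)) = 1 := by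
      rw [exp_sub, hh, exp_nat_mul]
      exact div_self (pow_ne_zero _ (exp_ne_zero _))
    obtain ⟨k, hk⟩ := exp_eq_one_iff.1 this
    refine ⟨k, ?_⟩
    have him : (h (expMapCircle θ)).im - m * θ = k * (2 * Real.pi) := by
      simpa using congrArg im hk
    simp only [g]
    field_simp
    linarith
  have hg_cont : Continuous g := by fun_prop
  have := eq_of_forall_eq_intCast hg_cont hg_int (2 * Real.pi) 0
  simp only [g, expMapCircle_two_pi] at this
  field_simp at this
  have hm : (m : ℝ) * (2 * Real.pi) = 0 := by linarith
  exact_mod_cast (mul_eq_zero.1 hm).resolve_right (by positivity)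

def coordUnitary : unitary C(Torus, ℂ) :=
  ⟨⟨Subtype.val, continuous_subtype_val⟩,
    ContinuousMap.mem_unitary_iff_forall_norm_eq_one.2 fun z => by simp⟩

theorem coordUnitary_pow_apply (m : ℕ) (z : Torus) :
    ((coordUnitary ^ m : unitary C(Torus, ℂ)) : C(Torus, ℂ)) z = (z : ℂ) ^ m := by
  simp [coordUnitary]

theorem coordUnitary_pow_notMem_unitaryExpSubgroup {m : ℕ} (hm : m ≠ 0) :
    coordUnitary ^ m ∉ ContinuousMap.unitaryExpSubgroup Torus := by
  rintro ⟨h, hh⟩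
  exact hm <| eq_zero_of_forall_exp_eq_pow fun z => by rw [← hh, coordUnitary_pow_apply]

end Torus

/-- In the unitary group `G` of `C(𝕋, ℂ)`, with `V = {u : ‖u - 1‖ < 2}`, one has `F·Vⁿ ≠ G`
for every `n` and every finite `F ⊆ G`.  In particular, `G` with the norm topology is not
bounded. -/
theorem stmt11 :
    (∀ (n : ℕ) (F : Set (unitary C(Torus, ℂ))), F.Finite →
      F * {u : unitary C(Torus, ℂ) | ‖(u : C(Torus, ℂ)) - 1‖ < 2} ^ n ≠ Set.univ) ∧
    ¬ IsBoundedTopologicalGroup (unitary C(Torus, ℂ)) := by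
  have key : ∀ (n : ℕ) (F : Set (unitary C(Torus, ℂ))), F.Finite →
      F * {u : unitary C(Torus, ℂ) | ‖(u : C(Torus, ℂ)) - 1‖ < 2} ^ n ≠ Set.univ := by
    intro n F hF hcover
    set H := ContinuousMap.unitaryExpSubgroup Torus
    have hpow : {u : unitary C(Torus, ℂ) | ‖(u : C(Torus, ℂ)) - 1‖ < 2} ^ n ⊆ H :=
      Submonoid.pow_subset (S := H.toSubmonoid)
        ContinuousMap.setOf_norm_sub_one_lt_two_subset_unitaryExpSubgroup
    have : H.FiniteIndex := H.finiteIndex_of_finite_mul_eq_univ hF <|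
      Set.eq_univ_of_subset (Set.mul_subset_mul_left hpow) hcover
    exact Torus.coordUnitary_pow_notMem_unitaryExpSubgroup
      Subgroup.FiniteIndex.index_ne_zero (H.pow_index_mem _)
  refine ⟨key, fun hbdd => ?_⟩
  obtain ⟨n, F, hF, hcover⟩ := hbdd _ (setOf_norm_sub_one_lt_mem_nhds two_pos)
  exact key n F hF (by rwa [mul_comm] at hcover)
end
end

section
/- Let X be a compact Hausdorff topological space. The unitary group of the C*-algebra C(X, ℂ) of continuous complex-valued functions on X, equipped with the supremum-norm topology, is bounded if and only if X is totally disconnected. -/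
/-!
Near `1` a unitary `u ∈ C(X, ℂ)` takes values in the slit plane, so `arg ∘ u` is a continuous
logarithm; hence every element of `Vⁿ`, `V` the unit ball around `1`, is `exp (i g)` with
`|g| ≤ nπ`. Two continuous logarithms of the same unitary differ by a locally constant multiple
of `2π`, so along a connected set the increment of a logarithm of an element of `Vⁿ / Vⁿ` is at
most `4nπ`. If `x ≠ y` lie in a connected set, let `φ` be an Urysohn function with `φ x = 0`,
`φ y = 1`; since `Vⁿ · F` covers the group with `F` finite, pigeonhole puts some power
`exp (2πi k φ)` with `k > 2n` into `Vⁿ / Vⁿ`, although its logarithm increases by `2πk` from `x`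
to `y`.

Conversely, if `X` is totally disconnected, a clopen set separates the points where `u` avoids
the negative real axis from those where `-u` does; this gives every unitary a logarithm `g`
with `‖g‖ ≤ 2π`, and then `u = (exp (i g / n))ⁿ` with `exp (i g / n) ∈ V` for one `n` that
depends only on `V`.
-/

open Topology Pointwise

universe u

noncomputable section

open Complex Set Metric
open scoped Real

lemma exists_pow_mem_div_of_mul_eq_univ {G : Type*} [CommGroup G] {A F : Set G} (hF : F.Finite)
    (hAF : A * F = univ) (g : G) : ∃ m : ℕ, 0 < m ∧ g ^ m ∈ A / A := by
  have hmem : ∀ j : ℕ, ∃ a ∈ A, ∃ f ∈ F, a * f = g ^ j := fun j => by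
    rw [← mem_mul, hAF]; exact mem_univ _
  choose a ha f hf hfa using hmem
  obtain ⟨i, j, hij, hfij⟩ := hF.exists_lt_map_eq_of_forall_mem hf
  refine ⟨j - i, Nat.sub_pos_of_lt hij, a j, ha j, a i, ha i, ?_⟩
  rw [pow_sub g hij.le, ← hfa i, ← hfa j, hfij, ← div_eq_mul_inv, mul_div_mul_right_eq_div]

lemma exp_arg_mul_I_of_norm_eq_one {z : ℂ} (hz : ‖z‖ = 1) : exp (arg z * I) = z := by
  simpa [hz] using norm_mul_exp_arg_mul_I z

section

variable {X : Type*} [TopologicalSpace X]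

lemma norm_unitary_apply (u : unitary C(X, ℂ)) (x : X) : ‖(u : C(X, ℂ)) x‖ = 1 := by
  have h : ((‖(u : C(X, ℂ)) x‖ ^ 2 : ℝ) : ℂ) = 1 := by
    rw [ofReal_pow, ← conj_mul']
    exact congr($(Unitary.star_mul_self_of_mem u.2) x)
  rw [← pow_left_inj₀ (norm_nonneg _) zero_le_one two_ne_zero, one_pow]
  exact_mod_cast h

def expUnitary (g : C(X, ℝ)) : unitary C(X, ℂ) :=
  ⟨⟨fun x => exp (g x * I), by fun_prop⟩, by
    constructor <;> ext x <;> simp [← exp_conj, ← exp_add]⟩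

@[simp]
lemma expUnitary_apply (g : C(X, ℝ)) (x : X) :
    (expUnitary g : C(X, ℂ)) x = exp (g x * I) := rfl

lemma expUnitary_add (g h : C(X, ℝ)) : expUnitary (g + h) = expUnitary g * expUnitary h := by
  ext x
  simp [add_mul, exp_add]

lemma expUnitary_sub (g h : C(X, ℝ)) : expUnitary (g - h) = expUnitary g / expUnitary h := by
  rw [eq_div_iff_mul_eq', ← expUnitary_add, sub_add_cancel]

lemma expUnitary_nsmul (n : ℕ) (g : C(X, ℝ)) : expUnitary (n • g) = expUnitary g ^ n := by
  induction n with
  | zero => ext x; simp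
  | succ n ih => rw [succ_nsmul, expUnitary_add, ih, pow_succ]

lemma exists_expUnitary_eq_of_mem_slitPlane (u : unitary C(X, ℂ))
    (hu : ∀ x, (u : C(X, ℂ)) x ∈ slitPlane) :
    ∃ g : C(X, ℝ), u = expUnitary g ∧ ∀ x, |g x| ≤ π := by
  refine ⟨⟨fun x => arg ((u : C(X, ℂ)) x), ?_⟩, ?_, fun x => abs_arg_le_pi _⟩
  · exact continuous_iff_continuousAt.2 fun x =>
      (continuousAt_arg (hu x)).comp (map_continuous _).continuousAt
  · ext x
    exact (exp_arg_mul_I_of_norm_eq_one (norm_unitary_apply u x)).symm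

lemma IsPreconnected.apply_eq_of_expUnitary_eq_one {S : Set X} (hS : IsPreconnected S)
    {g : C(X, ℝ)} (hg : expUnitary g = 1) {x y : X} (hx : x ∈ S) (hy : y ∈ S) : g x = g y := by
  have hmul : ∀ z, ∃ k : ℤ, g z = k * (2 * π) := fun z => by
    obtain ⟨k, hk⟩ := exp_eq_one_iff.1 congr(($hg : C(X, ℂ)) z)
    refine ⟨k, ?_⟩
    have : (g z : ℂ) = (k * (2 * π) : ℝ) := by
      apply mul_right_cancel₀ I_ne_zero
      push_cast
      rw [hk]
      ring
    exact_mod_cast this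
  choose k hk using hmul
  have hk_cont : Continuous k := by
    refine Int.isClosedEmbedding_coe_real.continuous_iff.2 ?_
    have : ((↑) ∘ k : X → ℝ) = fun z => g z / (2 * π) := by
      ext z; simp [hk, Real.pi_ne_zero]
    rw [this]; fun_prop
  rw [hk x, hk y, hS.constant hk_cont.continuousOn hx hy]

variable [CompactSpace X]

lemma exists_expUnitary_eq_of_mem_ball_pow {n : ℕ} {a : unitary C(X, ℂ)}
    (ha : a ∈ ball (1 : unitary C(X, ℂ)) 1 ^ n) :
    ∃ g : C(X, ℝ), a = expUnitary g ∧ ∀ x, |g x| ≤ n * π := by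
  induction n generalizing a with
  | zero =>
    rw [pow_zero, mem_one] at ha
    exact ⟨0, by ext x; simp [ha], by simp⟩
  | succ n ih =>
    rw [pow_succ] at ha
    obtain ⟨b, hb, c, hc, rfl⟩ := ha
    obtain ⟨g, rfl, hg⟩ := ih hb
    have hc_slit : ∀ x, (c : C(X, ℂ)) x ∈ slitPlane := fun x =>
      ball_one_subset_slitPlane <| (ContinuousMap.dist_apply_le_dist x).trans_lt hc
    obtain ⟨h, rfl, hh⟩ := exists_expUnitary_eq_of_mem_slitPlane c hc_slit
    refine ⟨g + h, (expUnitary_add g h).symm, fun x => ?_⟩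
    calc |g x + h x| ≤ |g x| + |h x| := abs_add_le _ _
      _ ≤ n * π + π := add_le_add (hg x) (hh x)
      _ = (n + 1 : ℕ) * π := by push_cast; ring

lemma IsPreconnected.abs_sub_le_of_expUnitary_mem_div {S : Set X} (hS : IsPreconnected S)
    {x y : X} (hx : x ∈ S) (hy : y ∈ S) {n : ℕ} {ψ : C(X, ℝ)}
    (hψ : expUnitary ψ ∈ ball (1 : unitary C(X, ℂ)) 1 ^ n / ball 1 1 ^ n) :
    |ψ y - ψ x| ≤ 4 * n * π := by
  obtain ⟨a, ha, b, hb, hab⟩ := hψ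
  have hab : a / b = expUnitary ψ := hab
  obtain ⟨g₁, rfl, hg₁⟩ := exists_expUnitary_eq_of_mem_ball_pow ha
  obtain ⟨g₂, rfl, hg₂⟩ := exists_expUnitary_eq_of_mem_ball_pow hb
  have hone : expUnitary (ψ - (g₁ - g₂)) = 1 := by
    rw [expUnitary_sub, expUnitary_sub, hab, div_self']
  have hconst := hS.apply_eq_of_expUnitary_eq_one hone hx hy
  simp only [ContinuousMap.sub_apply] at hconst
  have := abs_le.1 (hg₁ x); have := abs_le.1 (hg₁ y)
  have := abs_le.1 (hg₂ x); have := abs_le.1 (hg₂ y)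
  rw [abs_le]; constructor <;> linarith

theorem totallyDisconnectedSpace_of_isBoundedTopologicalGroup [T2Space X]
    (hX : IsBoundedTopologicalGroup (unitary C(X, ℂ))) : TotallyDisconnectedSpace X := by
  refine ⟨fun S _ hS x hx y hy => by_contra fun hxy => ?_⟩
  obtain ⟨φ, hφx, hφy, -⟩ := exists_continuous_zero_one_of_isClosed isClosed_singleton
    isClosed_singleton (disjoint_singleton.2 hxy)
  obtain ⟨n, F, hF, hcov⟩ := hX _ (ball_mem_nhds 1 one_pos)
  obtain ⟨m, hm, hmem⟩ := exists_pow_mem_div_of_mul_eq_univ hF hcov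
    (expUnitary (((2 * n + 1) * (2 * π)) • φ))
  rw [← expUnitary_nsmul] at hmem
  have hwinding := hS.abs_sub_le_of_expUnitary_mem_div hx hy hmem
  have hm1 : (1 : ℝ) ≤ m := by exact_mod_cast hm
  have hdiff : (m • ((2 * n + 1) * (2 * π)) • φ) y - (m • ((2 * n + 1) * (2 * π)) • φ) x =
      (2 * n + 1) * (2 * π) * m := by
    simp [hφx rfl, hφy rfl]
  rw [hdiff, abs_of_pos (by positivity)] at hwinding
  have := le_mul_of_one_le_right (by positivity : (0 : ℝ) ≤ (2 * n + 1) * (2 * π)) hm1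
  linarith [Real.pi_pos]

lemma dist_expUnitary_one_le (g : C(X, ℝ)) : dist (expUnitary g) 1 ≤ ‖g‖ := by
  refine (ContinuousMap.dist_le (norm_nonneg _)).2 fun x => ?_
  rw [expUnitary_apply, OneMemClass.coe_one, ContinuousMap.one_apply, dist_eq_norm, mul_comm]
  exact Real.norm_exp_I_mul_ofReal_sub_one_le.trans (g.norm_coe_le_norm x)

lemma exists_expUnitary_eq [T2Space X] [TotallyDisconnectedSpace X] (u : unitary C(X, ℂ)) :
    ∃ g : C(X, ℝ), u = expUnitary g ∧ ‖g‖ ≤ 2 * π := by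
  obtain ⟨C, hC, hZC, hCU⟩ := exists_clopen_of_closed_subset_open
    (Z := {x | -(u : C(X, ℂ)) x ∉ slitPlane}) (U := {x | (u : C(X, ℂ)) x ∈ slitPlane})
    (isOpen_slitPlane.isClosed_compl.preimage (by fun_prop))
    (isOpen_slitPlane.preimage (map_continuous _))
    fun x hx => (mem_slitPlane_or_neg_mem_slitPlane
      (norm_ne_zero_iff.1 (by simp [norm_unitary_apply]))).resolve_right hx
  -- `u * expUnitary s` is `u` on `C` and `-u` off `C`, so it avoids the negative real axis.
  let s : C(X, ℝ) := ⟨Cᶜ.indicator fun _ => π, hC.compl.continuous_indicator continuous_const⟩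
  have hslit : ∀ x, ((u * expUnitary s : unitary C(X, ℂ)) : C(X, ℂ)) x ∈ slitPlane := by
    intro x
    by_cases hx : x ∈ C
    · simpa [s, hx] using hCU hx
    · simpa [s, hx] using not_not.1 (mt (@hZC x) hx)
  obtain ⟨h, hh, hbound⟩ := exists_expUnitary_eq_of_mem_slitPlane _ hslit
  refine ⟨h - s, by rw [expUnitary_sub, ← hh, mul_div_cancel_right], ?_⟩
  refine (ContinuousMap.norm_le _ Real.two_pi_pos.le).2 fun x => ?_
  have hs : |s x| ≤ π := by
    by_cases hx : x ∈ C <;> simp [s, hx, Real.pi_nonneg, abs_of_pos Real.pi_pos]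
  calc ‖(h - s) x‖ ≤ |h x| + |s x| := abs_sub _ _
    _ ≤ π + π := add_le_add (hbound x) hs
    _ = 2 * π := by ring

theorem isBoundedTopologicalGroup_of_totallyDisconnectedSpace [T2Space X]
    [TotallyDisconnectedSpace X] : IsBoundedTopologicalGroup (unitary C(X, ℂ)) := by
  intro V hV
  obtain ⟨ε, hε, hball⟩ := Metric.mem_nhds_iff.1 hV
  obtain ⟨n, hn⟩ := exists_nat_gt (2 * π / ε)
  have hn0 : (0 : ℝ) < n := (div_pos Real.two_pi_pos hε).trans hn
  refine ⟨n, {1}, finite_singleton 1, eq_univ_of_forall fun u => ?_⟩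
  obtain ⟨g, rfl, hg⟩ := exists_expUnitary_eq u
  have hsmall : expUnitary ((n : ℝ)⁻¹ • g) ∈ V := by
    refine hball <| (dist_expUnitary_one_le _).trans_lt ?_
    rw [norm_smul, norm_inv, RCLike.norm_natCast, inv_mul_lt_iff₀ hn0]
    exact hg.trans_lt ((div_lt_iff₀ hε).1 hn)
  refine ⟨_, pow_mem_pow hsmall, 1, rfl, ?_⟩
  show _ * 1 = _
  rw [mul_one, ← expUnitary_nsmul, ← Nat.cast_smul_eq_nsmul ℝ, smul_inv_smul₀ hn0.ne']

end

/-- For a compact Hausdorff space `X`, the unitary group of `C(X, ℂ)` with the supremum-norm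
topology is bounded if and only if `X` is totally disconnected. -/
theorem stmt12 (X : Type u) [TopologicalSpace X] [CompactSpace X] [T2Space X] :
    IsBoundedTopologicalGroup (unitary C(X, ℂ)) ↔ TotallyDisconnectedSpace X :=
  ⟨totallyDisconnectedSpace_of_isBoundedTopologicalGroup,
    fun _ => isBoundedTopologicalGroup_of_totallyDisconnectedSpace⟩
end
end

section
/- Let A be a unital C*-algebra. Then the unitary group of A with the norm topology is a locally connected topological space. Consequently, the unitary group of A with the norm topology is bounded if and only if it has finitely many connected components and its identity component (with the subspace topology) is a bounded topological group. -/
open Topology Pointwise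

universe u

noncomputable section

variable {A : Type u} [NormedRing A] [StarRing A] [CStarRing A]
    [NormedAlgebra ℂ A] [CompleteSpace A] [StarModule ℂ A]

instance : IsTopologicalGroup (unitary A) where
  continuous_mul := by
    apply Continuous.subtype_mk
    exact (continuous_subtype_val.comp continuous_fst).mul
      (continuous_subtype_val.comp continuous_snd)
  continuous_inv := by
    apply Continuous.subtype_mk
    exact continuous_star.comp continuous_subtype_val

/-!
If `‖u - 1‖ < 2` for a unitary `u`, then `-1 ∉ σ(u)`, so the principal argument is continuous on
`σ(u)` and `t ↦ exp (i t · arg u)` (continuous functional calculus) is a path from `1` to `u` that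
stays in the ball of radius `‖u - 1‖`. Hence the unitary group is locally path connected; Mathlib
has this as `Unitary.instLocallyPathConnectedSpace`.

In a locally connected group the identity component `G₀` is an open subgroup whose cosets are the
components. For any open subgroup `H`, boundedness of `G` amounts to finite index of `H` together
with boundedness of `H`: neighbourhoods of `1` in `H` are neighbourhoods of `1` in `G`, and a finite
set of coset representatives supplies the extra finite factor.
-/

namespace IsBoundedTopologicalGroup

variable {G : Type*} [Group G] [TopologicalSpace G] {H : Subgroup G}

theorem finite_quotient_of_isOpen (hG : IsBoundedTopologicalGroup G) (hH : IsOpen (H : Set G)) :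
    Finite (G ⧸ H) := by
  obtain ⟨n, F, hF, hHF⟩ := hG H (hH.mem_nhds H.one_mem)
  have : Finite ↥(F⁻¹ : Set G) := hF.inv.to_subtype
  refine Finite.of_surjective (fun f : ↥(F⁻¹ : Set G) ↦ (f : G ⧸ H)) <|
    QuotientGroup.mk_surjective.forall.2 fun x ↦ ?_
  -- decompose `x⁻¹` rather than `x`, so that `F⁻¹` meets the left coset `x H`
  obtain ⟨h, hh, f, hf, hx⟩ : x⁻¹ ∈ (H : Set G) ^ n * F := hHF ▸ Set.mem_univ _
  refine ⟨⟨f⁻¹, Set.inv_mem_inv.2 hf⟩, QuotientGroup.eq.2 ?_⟩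
  have : f * x = h⁻¹ := by rw [← inv_inj, mul_inv_rev, ← hx]; group
  simpa [this] using Subgroup.pow_subset le_rfl hh

theorem subgroup_of_isOpen (hG : IsBoundedTopologicalGroup G) (hH : IsOpen (H : Set G)) :
    IsBoundedTopologicalGroup H := by
  intro V hV
  obtain ⟨n, F, hF, hVF⟩ :=
    hG (Subtype.val '' V) (hH.isOpenEmbedding_subtypeVal.image_mem_nhds.2 hV)
  refine ⟨n, Subtype.val ⁻¹' F, hF.preimage Subtype.val_injective.injOn,
    Set.eq_univ_of_forall fun x ↦ ?_⟩
  obtain ⟨w, hw, f, hf, hx⟩ : (x : G) ∈ (Subtype.val '' V) ^ n * F := hVF ▸ Set.mem_univ _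
  obtain ⟨v, hv, rfl⟩ : w ∈ H.subtype '' (V ^ n) := by rwa [Set.image_pow]
  have hfH : f ∈ H := by
    rw [show f = (v : G)⁻¹ * x by rw [← hx]; simp]
    exact H.mul_mem (H.inv_mem v.2) x.2
  exact ⟨v, hv, ⟨f, hfH⟩, hf, Subtype.ext hx⟩

theorem of_finite_quotient [Finite (G ⧸ H)] (hH : IsBoundedTopologicalGroup H) :
    IsBoundedTopologicalGroup G := by
  intro V hV
  obtain ⟨n, F, hF, hVF⟩ := hH (Subtype.val ⁻¹' V) (continuous_subtype_val.continuousAt hV)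
  let R : Set G := Set.range (Quotient.out : G ⧸ H → G)
  refine ⟨n, Subtype.val '' F * R⁻¹, (hF.image _).mul (Set.finite_range _).inv,
    Set.eq_univ_of_forall fun x ↦ ?_⟩
  set r := ((x⁻¹ : G) : G ⧸ H).out
  have hr : x * r ∈ H := by
    simpa using H.inv_mem (QuotientGroup.eq.1 (QuotientGroup.out_eq' ((x⁻¹ : G) : G ⧸ H)))
  obtain ⟨v, hv, f, hf, hvf : v * f = ⟨x * r, hr⟩⟩ :
      (⟨x * r, hr⟩ : H) ∈ (Subtype.val ⁻¹' V) ^ n * F :=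
    hVF ▸ Set.mem_univ _
  have hvV : (v : G) ∈ V ^ n := by
    have : (v : G) ∈ H.subtype '' ((Subtype.val ⁻¹' V) ^ n) := ⟨v, hv, rfl⟩
    rw [Set.image_pow] at this
    exact Set.pow_subset_pow_left (Set.image_preimage_subset _ _) this
  refine ⟨v, hvV, f * r⁻¹, Set.mul_mem_mul ⟨f, hf, rfl⟩ (Set.inv_mem_inv.2 ⟨_, rfl⟩), ?_⟩
  change (v : G) * (f * r⁻¹) = x
  rw [← mul_assoc, ← Subgroup.coe_mul, hvf, mul_inv_cancel_right]

end IsBoundedTopologicalGroup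

theorem isBoundedTopologicalGroup_iff_of_isOpen {G : Type*} [Group G] [TopologicalSpace G]
    {H : Subgroup G} (hH : IsOpen (H : Set G)) :
    IsBoundedTopologicalGroup G ↔ Finite (G ⧸ H) ∧ IsBoundedTopologicalGroup H :=
  ⟨fun hG ↦ ⟨hG.finite_quotient_of_isOpen hH, hG.subgroup_of_isOpen hH⟩,
    fun ⟨_, hH⟩ ↦ hH.of_finite_quotient⟩

section IdentityComponent

variable {G : Type*} [Group G] [TopologicalSpace G] [IsTopologicalGroup G]

theorem connectedComponent_eq_iff_inv_mul_mem {x y : G} :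
    connectedComponent x = connectedComponent y ↔ x⁻¹ * y ∈ connectedComponent 1 := by
  rw [eq_comm, connectedComponent_eq_iff_mem, ← mul_one x, ← smul_connectedComponent,
    Set.mem_smul_set_iff_inv_smul_mem, mul_one, smul_eq_mul]

def connectedComponentsEquivQuotient :
    ConnectedComponents G ≃ G ⧸ Subgroup.connectedComponentOfOne G :=
  Quotient.congr (Equiv.refl G) fun _ _ ↦ connectedComponent_eq_iff_inv_mul_mem.trans
    (QuotientGroup.leftRel_apply (s := Subgroup.connectedComponentOfOne G)).symm

theorem isBoundedTopologicalGroup_iff_of_locallyConnectedSpace [LocallyConnectedSpace G] :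
    IsBoundedTopologicalGroup G ↔ Finite (ConnectedComponents G) ∧
      IsBoundedTopologicalGroup (Subgroup.connectedComponentOfOne G) := by
  rw [isBoundedTopologicalGroup_iff_of_isOpen (H := Subgroup.connectedComponentOfOne G)
    isOpen_connectedComponent, connectedComponentsEquivQuotient.finite_iff]

end IdentityComponent

/-- The unitary group of a unital C*-algebra with the norm topology is locally connected;
consequently, it is bounded if and only if it has finitely many connected components and its
identity component is bounded. -/
theorem stmt13 (A : Type u) [NormedRing A] [StarRing A] [CStarRing A]
    [NormedAlgebra ℂ A] [CompleteSpace A] [StarModule ℂ A] :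
    LocallyConnectedSpace (unitary A) ∧
      (IsBoundedTopologicalGroup (unitary A) ↔
        Finite (ConnectedComponents (unitary A)) ∧
          IsBoundedTopologicalGroup (Subgroup.connectedComponentOfOne (unitary A))) := by
  have : LocallyConnectedSpace (unitary A) :=
    let _ : CStarAlgebra A := {}
    inferInstance
  exact ⟨this, isBoundedTopologicalGroup_iff_of_locallyConnectedSpace⟩
end
end

section
/- Let A be a unital C*-algebra that is infinite-dimensional as a complex vector space, and let B be a maximal abelian star-subalgebra of A, i.e., a commutative star-subalgebra of A that is maximal with respect to inclusion among commutative star-subalgebras of A. Then B is infinite-dimensional as a complex vector space. -/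
/-!
Being commutative and finite-dimensional, `B` is a reduced Artinian ring, hence a finite product
of copies of `ℂ`; this gives star projections `pᵢ ∈ B` with `∑ pᵢ = 1` and `pᵢ B = ℂ pᵢ`.
Every corner `pᵢ a pᵢ` commutes with `B`, so by maximality it lies in `B` and is a multiple of
`pᵢ`. The C⋆-identity turns this into `dim pᵢ A pⱼ ≤ 1`, and `A = ∑ pᵢ A pⱼ`.
-/

universe u

namespace IsArtinianRing

variable {R : Type*} [CommRing R] [IsArtinianRing R] [IsReduced R]

open scoped Classical in
noncomputable def primitiveIdempotent (I : MaximalSpectrum R) : R :=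
  (equivPi R).symm (Pi.single I 1)

theorem isIdempotentElem_primitiveIdempotent (I : MaximalSpectrum R) :
    IsIdempotentElem (primitiveIdempotent I) := by
  classical
  rw [IsIdempotentElem, primitiveIdempotent, ← map_mul, ← Pi.single_mul, one_mul]

theorem sum_primitiveIdempotent [Fintype (MaximalSpectrum R)] :
    ∑ I, primitiveIdempotent (R := R) I = 1 := by
  classical
  simp only [primitiveIdempotent, ← map_sum, Finset.univ_sum_single]
  exact map_one _

theorem primitiveIdempotent_mul_eq_smul (k : Type*) [Field k] [IsAlgClosed k] [Algebra k R]
    [Module.Finite k R] (I : MaximalSpectrum R) (r : R) :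
    ∃ c : k, primitiveIdempotent I * r = c • primitiveIdempotent I := by
  classical
  obtain ⟨c, hc⟩ : ∃ c : k, algebraMap k (R ⧸ I.asIdeal) c = Ideal.Quotient.mk I.asIdeal r :=
    IsAlgClosed.algebraMap_bijective_of_isIntegral.2 _
  refine ⟨c, (equivPi R).injective (funext fun J => ?_)⟩
  rw [map_mul, Algebra.smul_def, map_mul]
  rcases eq_or_ne J I with rfl | hJI
  · simp [primitiveIdempotent, ← hc]
  · simp [primitiveIdempotent, Pi.single_eq_of_ne hJI]

end IsArtinianRing

section CStarRing

variable {A : Type*} [NormedRing A] [StarRing A] [CStarRing A]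

theorem IsSelfAdjoint.eq_zero_of_isNilpotent {x : A} (hx : IsSelfAdjoint x)
    (hnil : IsNilpotent x) : x = 0 := by
  obtain ⟨n, hn⟩ := hnil
  have h : ‖x‖₊ ^ 2 ^ n = 0 := by
    rw [← hx.nnnorm_pow_two_pow, pow_eq_zero_of_le n.lt_two_pow_self.le hn, nnnorm_zero]
  simpa using h

theorem IsStarNormal.eq_zero_of_isNilpotent {x : A} [hx : IsStarNormal x]
    (hnil : IsNilpotent x) : x = 0 := by
  obtain ⟨n, hn⟩ := hnil
  have h : star x * x = 0 := (IsSelfAdjoint.star_mul_self x).eq_zero_of_isNilpotent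
    ⟨n, by rw [hx.star_comm_self.mul_pow, hn, mul_zero]⟩
  exact CStarRing.star_mul_self_eq_zero_iff x |>.mp h

end CStarRing

namespace StarSubalgebra

open ComplexStarModule

variable {A : Type*} [Ring A] [StarRing A] [Algebra ℂ A] [StarModule ℂ A]

theorem realPart_mem (S : StarSubalgebra ℂ A) {x : A} (hx : x ∈ S) : (ℜ x : A) ∈ S := by
  rw [realPart_apply_coe, ← Complex.coe_smul]
  exact S.smul_mem (add_mem hx (star_mem hx)) _

theorem imaginaryPart_mem (S : StarSubalgebra ℂ A) {x : A} (hx : x ∈ S) : (ℑ x : A) ∈ S := by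
  rw [imaginaryPart_apply_coe, ← Complex.coe_smul]
  exact S.smul_mem (S.smul_mem (sub_mem hx (star_mem hx)) _) _

variable {B : StarSubalgebra ℂ A}

theorem mem_of_isSelfAdjoint_of_mem_centralizer (hcomm : ∀ x ∈ B, ∀ y ∈ B, x * y = y * x)
    (hmax : ∀ C : StarSubalgebra ℂ A, (∀ x ∈ C, ∀ y ∈ C, x * y = y * x) → B ≤ C → B = C)
    {y : A} (hy : IsSelfAdjoint y) (hyB : y ∈ Set.centralizer (B : Set A)) : y ∈ B := by
  set s : Set A := insert y B
  have hs : ∀ a ∈ s, ∀ b ∈ s, a * b = b * a := by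
    rintro a (rfl | ha) b (rfl | hb)
    · rfl
    · exact (hyB b hb).symm
    · exact hyB a ha
    · exact hcomm a ha b hb
  have hstar : ∀ a ∈ s, ∀ b ∈ s, a * star b = star b * a := by
    rintro a ha b (rfl | hb)
    · rw [hy.star_eq]; exact hs a ha _ (Set.mem_insert _ _)
    · exact hs a ha _ (Or.inr (star_mem hb))
  have := StarAlgebra.isMulCommutative_adjoin ℂ hs hstar
  have hC : B = StarAlgebra.adjoin ℂ s := hmax _
    (fun u hu v hv => congrArg Subtype.val (mul_comm' (⟨u, hu⟩ : StarAlgebra.adjoin ℂ s) ⟨v, hv⟩))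
    fun b hb => StarAlgebra.subset_adjoin ℂ s (Or.inr hb)
  exact hC ▸ StarAlgebra.subset_adjoin ℂ s (Set.mem_insert _ _)

theorem mem_of_mem_centralizer (hcomm : ∀ x ∈ B, ∀ y ∈ B, x * y = y * x)
    (hmax : ∀ C : StarSubalgebra ℂ A, (∀ x ∈ C, ∀ y ∈ C, x * y = y * x) → B ≤ C → B = C)
    {x : A} (hx : x ∈ Set.centralizer (B : Set A)) : x ∈ B := by
  have hC : (centralizer ℂ (B : Set A) : Set A) = Set.centralizer B := by
    rw [coe_centralizer, Set.union_eq_left.2 fun a ha => by simpa using star_mem (s := B) ha]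
  rw [← hC, SetLike.mem_coe] at hx
  have hre := mem_of_isSelfAdjoint_of_mem_centralizer hcomm hmax (ℜ x).2
    (hC ▸ realPart_mem _ hx)
  have him := mem_of_isSelfAdjoint_of_mem_centralizer hcomm hmax (ℑ x).2
    (hC ▸ imaginaryPart_mem _ hx)
  rw [← realPart_add_I_smul_imaginaryPart x]
  exact add_mem hre (B.smul_mem him _)

theorem exists_mul_mul_eq_smul (hcomm : ∀ x ∈ B, ∀ y ∈ B, x * y = y * x)
    (hmax : ∀ C : StarSubalgebra ℂ A, (∀ x ∈ C, ∀ y ∈ C, x * y = y * x) → B ≤ C → B = C)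
    {p : A} (hpB : p ∈ B) (hp : IsIdempotentElem p)
    (hsmul : ∀ b ∈ B, ∃ c : ℂ, p * b = c • p) (a : A) : ∃ c : ℂ, p * a * p = c • p := by
  have hcent : p * a * p ∈ Set.centralizer (B : Set A) := fun b hb => by
    obtain ⟨c, hc⟩ := hsmul b hb
    have hleft : b * (p * a * p) = c • (p * a * p) := by
      rw [← mul_assoc, ← mul_assoc, hcomm b hb p hpB, hc, smul_mul_assoc, smul_mul_assoc]
    have hright : p * a * p * b = c • (p * a * p) := by rw [mul_assoc, hc, mul_smul_comm]
    rw [hleft, hright]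
  obtain ⟨c, hc⟩ := hsmul _ (mem_of_mem_centralizer hcomm hmax hcent)
  exact ⟨c, by rw [← hc, ← mul_assoc, ← mul_assoc, hp.eq]⟩

end StarSubalgebra

theorem exists_mul_mul_eq_smul_of_corners {𝕜 A : Type*} [Field 𝕜] [NormedRing A] [StarRing A]
    [CStarRing A] [Algebra 𝕜 A] {p q : A} (hp : IsStarProjection p) (hq : IsStarProjection q)
    (hpA : ∀ a, ∃ c : 𝕜, p * a * p = c • p) (hqA : ∀ a, ∃ c : 𝕜, q * a * q = c • q) :
    ∃ x₀ : A, ∀ a, ∃ c : 𝕜, p * a * q = c • x₀ := by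
  have hp_mul (a : A) : p * (p * a * q) = p * a * q := by
    rw [← mul_assoc, ← mul_assoc, hp.isIdempotentElem.eq]
  have h_mulq (a : A) : p * a * q * q = p * a * q := by
    rw [mul_assoc, hq.isIdempotentElem.eq]
  by_cases h : ∀ a, p * a * q = 0
  · exact ⟨0, fun a => ⟨0, by rw [h a, zero_smul]⟩⟩
  push Not at h
  obtain ⟨a₀, hx₀⟩ := h
  have hxq : p * a₀ * q * q = p * a₀ * q := h_mulq a₀
  have hpx : p * (p * a₀ * q) = p * a₀ * q := hp_mul a₀
  generalize p * a₀ * q = x₀ at hx₀ hxq hpx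
  have hq_star : q * star x₀ = star x₀ := by
    rw [← hq.isSelfAdjoint.star_eq, ← star_mul, hxq]
  have hstar_p : star x₀ * p = star x₀ := by
    rw [← hp.isSelfAdjoint.star_eq, ← star_mul, hpx]
  -- By the C⋆-identity `x₀⋆ x₀` is a nonzero multiple of `q`, so multiplying `p a q` by it on
  -- the right recovers `p a q` up to a scalar, while `p a q x₀⋆ ∈ p A p` is a multiple of `p`.
  obtain ⟨c, hc⟩ := hqA (star x₀ * x₀)
  have hxx : star x₀ * x₀ = c • q := by
    rw [← hc, ← mul_assoc q, hq_star, mul_assoc, hxq]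
  have hc0 : c ≠ 0 := fun h0 =>
    hx₀ ((CStarRing.star_mul_self_eq_zero_iff x₀).1 (by rw [hxx, h0, zero_smul]))
  refine ⟨x₀, fun a => ?_⟩
  obtain ⟨d, hd⟩ := hpA (p * a * q * star x₀)
  have hyx : p * a * q * star x₀ = d • p := by
    rw [← hd, ← mul_assoc p, hp_mul, mul_assoc _ (star x₀), hstar_p]
  have key : c • (p * a * q) = d • x₀ := calc
    c • (p * a * q) = p * a * q * (star x₀ * x₀) := by rw [hxx, mul_smul_comm, h_mulq]
    _ = d • x₀ := by rw [← mul_assoc, hyx, smul_mul_assoc, hpx]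
  exact ⟨c⁻¹ * d, by rw [mul_smul, ← key, inv_smul_smul₀ hc0]⟩

theorem Module.Finite.of_sum_eq_one_of_corners {K A ι : Type*} [CommSemiring K] [Semiring A]
    [Algebra K A] [Fintype ι] (p : ι → A) (hsum : ∑ i, p i = 1)
    (h : ∀ i j, ∃ x : A, ∀ a, ∃ c : K, p i * a * p j = c • x) : Module.Finite K A := by
  classical
  choose x hx using h
  refine ⟨⟨Finset.univ.image fun ij : ι × ι => x ij.1 ij.2, eq_top_iff.2 fun a _ => ?_⟩⟩
  have ha : a = ∑ i, ∑ j, p i * a * p j := calc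
    a = (∑ i, p i) * a * ∑ j, p j := by rw [hsum, one_mul, mul_one]
    _ = ∑ i, ∑ j, p i * a * p j := by rw [Finset.sum_mul, Finset.sum_mul_sum]
  rw [ha]
  refine Submodule.sum_mem _ fun i _ => Submodule.sum_mem _ fun j _ => ?_
  obtain ⟨c, hc⟩ := hx i j a
  rw [hc]
  exact Submodule.smul_mem _ _ (Submodule.subset_span (by simp))

open scoped IsMulCommutative in
theorem StarSubalgebra.exists_isStarProjection_sum_eq_one {A : Type u} [CStarAlgebra A]
    (B : StarSubalgebra ℂ A) (hcomm : ∀ x ∈ B, ∀ y ∈ B, x * y = y * x) [FiniteDimensional ℂ B] :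
    ∃ (ι : Type u) (_ : Fintype ι) (p : ι → A),
      (∀ i, p i ∈ B ∧ IsStarProjection (p i) ∧ ∀ b ∈ B, ∃ c : ℂ, p i * b = c • p i) ∧
        ∑ i, p i = 1 := by
  have : IsMulCommutative B := ⟨⟨fun x y => Subtype.ext (hcomm _ x.2 _ y.2)⟩⟩
  have hnormal (x : B) : IsStarNormal (x : A) := ⟨hcomm _ (star_mem x.2) _ x.2⟩
  have : IsReduced B := ⟨fun x hx => by
    have := hnormal x
    exact Subtype.ext (IsStarNormal.eq_zero_of_isNilpotent (hx.map B.subtype))⟩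
  have := IsArtinianRing.of_finite ℂ B
  have := Fintype.ofFinite (MaximalSpectrum B)
  refine ⟨MaximalSpectrum B, inferInstance, fun I => (IsArtinianRing.primitiveIdempotent I : B),
    fun I => ⟨SetLike.coe_mem _, ?_, fun b hb => ?_⟩, ?_⟩
  · have hidem := (IsArtinianRing.isIdempotentElem_primitiveIdempotent I).map B.subtype
    exact ⟨hidem, hidem.isSelfAdjoint_iff_isStarNormal.2 (hnormal _)⟩
  · obtain ⟨c, hc⟩ := IsArtinianRing.primitiveIdempotent_mul_eq_smul ℂ I ⟨b, hb⟩
    exact ⟨c, congrArg Subtype.val hc⟩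
  · simpa using congrArg Subtype.val (IsArtinianRing.sum_primitiveIdempotent (R := B))

/-- In an infinite-dimensional unital C*-algebra, every maximal abelian star-subalgebra is
infinite-dimensional. -/
theorem stmt16 (A : Type u) [NormedRing A] [StarRing A] [CStarRing A]
    [NormedAlgebra ℂ A] [CompleteSpace A] [StarModule ℂ A]
    (hA : ¬ FiniteDimensional ℂ A)
    (B : StarSubalgebra ℂ A)
    (hcomm : ∀ x ∈ B, ∀ y ∈ B, x * y = y * x)
    (hmax : ∀ C : StarSubalgebra ℂ A, (∀ x ∈ C, ∀ y ∈ C, x * y = y * x) → B ≤ C → B = C) :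
    ¬ FiniteDimensional ℂ B := by
  intro hB
  let _ : CStarAlgebra A := {}
  obtain ⟨ι, _, p, hp, hsum⟩ := B.exists_isStarProjection_sum_eq_one hcomm
  have hcorner (i : ι) (a : A) : ∃ c : ℂ, p i * a * p i = c • p i :=
    B.exists_mul_mul_eq_smul hcomm hmax (hp i).1 (hp i).2.1.isIdempotentElem (hp i).2.2 a
  exact hA (.of_sum_eq_one_of_corners p hsum fun i j =>
    exists_mul_mul_eq_smul_of_corners (hp i).2.1 (hp j).2.1 (hcorner i) (hcorner j))
end
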